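/- Let B be a DDSA whose guards are conjunctions of MCs over constants C, and let all constraints θ_i in a verification sequence be MC formulas over variables V ∪ V₀ and constants C. Then every history constraint hist(σ, θ⃗) along any symbolic run σ of B is logically equivalent to a quantifier-free MC formula over V ∪ V₀ and constants C. -/

import Mathlib

/-- Comparison operators of monotonicity constraints: `=, ≠, ≤, <, ≥, >`. -/
inductive MCRel | eq | ne | le | lt | ge | gt

def MCRel.sem : MCRel → ℚ → ℚ → Prop
  | .eq, a, b => a = b
  | .ne, a, b => a ≠ b
  | .le, a, b => a ≤ b
  | .lt, a, b => a < b
  | .ge, a, b => b ≤ a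
  | .gt, a, b => b < a

/-- A term of a monotonicity constraint: a variable or a rational constant. -/
inductive MCTerm (X : Type)
  | var (x : X)
  | const (q : ℚ)

def MCTerm.sem {X : Type} (α : X → ℚ) : MCTerm X → ℚ
  | .var x => α x
  | .const q => q

def MCTerm.constants {X : Type} : MCTerm X → Set ℚ
  | .var _ => ∅
  | .const q => {q}

/-- Monotonicity-constraint (MC) formulas: quantifier-free Boolean combinations of
atoms `p ⊙ q` with `p, q` variables or rational constants. -/
inductive MCForm (X : Type)
  | atom (r : MCRel) (p q : MCTerm X)
  | tru
  | fls
  | and (φ ψ : MCForm X)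
  | or (φ ψ : MCForm X)
  | not (φ : MCForm X)

def MCForm.sem {X : Type} (α : X → ℚ) : MCForm X → Prop
  | .atom r p q => r.sem (p.sem α) (q.sem α)
  | .tru => True
  | .fls => False
  | .and φ ψ => φ.sem α ∧ ψ.sem α
  | .or φ ψ => φ.sem α ∨ ψ.sem α
  | .not φ => ¬ φ.sem α

def MCForm.constants {X : Type} : MCForm X → Set ℚ
  | .atom _ p q => p.constants ∪ q.constants
  | .tru => ∅
  | .fls => ∅
  | .and φ ψ => φ.constants ∪ ψ.constants
  | .or φ ψ => φ.constants ∪ ψ.constants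
  | .not φ => φ.constants

namespace HistQE

variable {X Y : Type}

/-! ### Basic atoms with relations `=, ≤, <` -/

inductive Rel3 | req | rle | rlt
deriving DecidableEq

def Rel3.sem : Rel3 → ℚ → ℚ → Prop
  | .req, a, b => a = b
  | .rle, a, b => a ≤ b
  | .rlt, a, b => a < b

structure Atom (X : Type) where
  r : Rel3
  p : MCTerm X
  q : MCTerm X

def Atom.sem (α : X → ℚ) (a : Atom X) : Prop := a.r.sem (a.p.sem α) (a.q.sem α)

def Atom.constants (a : Atom X) : Set ℚ := a.p.constants ∪ a.q.constants

def Rel3.toMC : Rel3 → MCRel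
  | .req => .eq
  | .rle => .le
  | .rlt => .lt

def Atom.toForm (a : Atom X) : MCForm X := .atom a.r.toMC a.p a.q

lemma Atom.toForm_sem (a : Atom X) (α : X → ℚ) : a.toForm.sem α ↔ a.sem α := by
  obtain ⟨r, p, q⟩ := a
  cases r <;> exact Iff.rfl

lemma Atom.toForm_constants (a : Atom X) : a.toForm.constants = a.constants := rfl

/-! ### Conjunctions of lists of formulas -/

def conj : List (MCForm X) → MCForm X
  | [] => .tru
  | φ :: l => .and φ (conj l)

lemma conj_sem (l : List (MCForm X)) (α : X → ℚ) :
    (conj l).sem α ↔ ∀ φ ∈ l, φ.sem α := by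
  induction l with
  | nil => simp [conj, MCForm.sem]
  | cons φ l ih => simp [conj, MCForm.sem, ih]

lemma conj_constants {C : Set ℚ} (l : List (MCForm X)) (h : ∀ φ ∈ l, MCForm.constants φ ⊆ C) :
    (conj l).constants ⊆ C := by
  induction l with
  | nil => simp [conj, MCForm.constants]
  | cons φ l ih =>
    simp only [conj, MCForm.constants, Set.union_subset_iff]
    exact ⟨h φ (by simp), ih fun ψ hψ => h ψ (by simp [hψ])⟩

/-! ### Renaming of variables -/

def MCTerm.map (f : X → Y) : MCTerm X → MCTerm Y
  | .var x => .var (f x)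
  | .const q => .const q

def MCForm.map (f : X → Y) : MCForm X → MCForm Y
  | .atom r p q => .atom r (MCTerm.map f p) (MCTerm.map f q)
  | .tru => .tru
  | .fls => .fls
  | .and φ ψ => .and (MCForm.map f φ) (MCForm.map f ψ)
  | .or φ ψ => .or (MCForm.map f φ) (MCForm.map f ψ)
  | .not φ => .not (MCForm.map f φ)

lemma MCTerm.map_sem (f : X → Y) (t : MCTerm X) (α : Y → ℚ) :
    (MCTerm.map f t).sem α = t.sem (α ∘ f) := by cases t <;> rfl

lemma MCForm.map_sem (f : X → Y) (φ : MCForm X) (α : Y → ℚ) :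
    (MCForm.map f φ).sem α ↔ φ.sem (α ∘ f) := by
  induction φ with
  | atom r p q => simp [MCForm.map, MCForm.sem, MCTerm.map_sem]
  | tru => exact Iff.rfl
  | fls => exact Iff.rfl
  | and φ ψ ih1 ih2 => simp [MCForm.map, MCForm.sem, ih1, ih2]
  | or φ ψ ih1 ih2 => simp [MCForm.map, MCForm.sem, ih1, ih2]
  | not φ ih => simp [MCForm.map, MCForm.sem, ih]

lemma MCTerm.map_constants (f : X → Y) (t : MCTerm X) :
    (MCTerm.map f t).constants = t.constants := by cases t <;> rfl

lemma MCForm.map_constants (f : X → Y) (φ : MCForm X) :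
    (MCForm.map f φ).constants = φ.constants := by
  induction φ with
  | atom r p q => simp [MCForm.map, MCForm.constants, MCTerm.map_constants]
  | tru => rfl
  | fls => rfl
  | and φ ψ ih1 ih2 => simp [MCForm.map, MCForm.constants, ih1, ih2]
  | or φ ψ ih1 ih2 => simp [MCForm.map, MCForm.constants, ih1, ih2]
  | not φ ih => simp [MCForm.map, MCForm.constants, ih]

end HistQE
namespace HistQE
variable {X Y : Type}

/-- Semantics of a DNF given as a list of conjuncts (lists of atoms). -/
def dsem (L : List (List (Atom X))) (α : X → ℚ) : Prop :=
  ∃ l ∈ L, ∀ a ∈ l, a.sem α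

lemma toDNF (φ : MCForm X) :
    ∃ Lp Ln : List (List (Atom X)),
      (∀ l ∈ Lp, ∀ a ∈ l, Atom.constants a ⊆ φ.constants) ∧
      (∀ l ∈ Ln, ∀ a ∈ l, Atom.constants a ⊆ φ.constants) ∧
      (∀ α, φ.sem α ↔ dsem Lp α) ∧
      (∀ α, ¬ φ.sem α ↔ dsem Ln α) := by
  induction φ with
  | atom r p q =>
    have hc : ∀ s : Rel3, Atom.constants ⟨s, p, q⟩ ⊆ (MCForm.atom r p q).constants := by
      intro s; exact subset_rfl
    have hc' : ∀ s : Rel3, Atom.constants ⟨s, q, p⟩ ⊆ (MCForm.atom r p q).constants := by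
      intro s
      simp only [Atom.constants, MCForm.constants]
      rw [Set.union_comm]
    cases r with
    | eq =>
      refine ⟨[[⟨.req, p, q⟩]], [[⟨.rlt, p, q⟩], [⟨.rlt, q, p⟩]], ?_, ?_, ?_, ?_⟩ <;>
        simp [dsem, Atom.sem, Rel3.sem, MCForm.sem, MCRel.sem, hc, hc']
    | ne =>
      refine ⟨[[⟨.rlt, p, q⟩], [⟨.rlt, q, p⟩]], [[⟨.req, p, q⟩]], ?_, ?_, ?_, ?_⟩ <;>
        simp [dsem, Atom.sem, Rel3.sem, MCForm.sem, MCRel.sem, hc, hc']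
    | le =>
      refine ⟨[[⟨.rle, p, q⟩]], [[⟨.rlt, q, p⟩]], ?_, ?_, ?_, ?_⟩ <;>
        simp [dsem, Atom.sem, Rel3.sem, MCForm.sem, MCRel.sem, hc, hc']
    | lt =>
      refine ⟨[[⟨.rlt, p, q⟩]], [[⟨.rle, q, p⟩]], ?_, ?_, ?_, ?_⟩ <;>
        simp [dsem, Atom.sem, Rel3.sem, MCForm.sem, MCRel.sem, hc, hc']
    | ge =>
      refine ⟨[[⟨.rle, q, p⟩]], [[⟨.rlt, p, q⟩]], ?_, ?_, ?_, ?_⟩ <;>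
        simp [dsem, Atom.sem, Rel3.sem, MCForm.sem, MCRel.sem, hc, hc']
    | gt =>
      refine ⟨[[⟨.rlt, q, p⟩]], [[⟨.rle, p, q⟩]], ?_, ?_, ?_, ?_⟩ <;>
        simp [dsem, Atom.sem, Rel3.sem, MCForm.sem, MCRel.sem, hc, hc']
  | tru =>
    exact ⟨[[]], [], by simp, by simp, by simp [dsem, MCForm.sem], by simp [dsem, MCForm.sem]⟩
  | fls =>
    exact ⟨[], [[]], by simp, by simp, by simp [dsem, MCForm.sem], by simp [dsem, MCForm.sem]⟩
  | and φ ψ ih1 ih2 =>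
    obtain ⟨Lp1, Ln1, hp1, hn1, sp1, sn1⟩ := ih1
    obtain ⟨Lp2, Ln2, hp2, hn2, sp2, sn2⟩ := ih2
    have subl : φ.constants ⊆ (φ.and ψ).constants := Set.subset_union_left
    have subr : ψ.constants ⊆ (φ.and ψ).constants := Set.subset_union_right
    refine ⟨Lp1.flatMap fun l1 => Lp2.map fun l2 => l1 ++ l2, Ln1 ++ Ln2, ?_, ?_, ?_, ?_⟩
    · intro l hl a ha
      simp only [List.mem_flatMap, List.mem_map] at hl
      obtain ⟨l1, hl1, l2, hl2, rfl⟩ := hl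
      rcases List.mem_append.mp ha with h | h
      · exact (hp1 l1 hl1 a h).trans subl
      · exact (hp2 l2 hl2 a h).trans subr
    · intro l hl a ha
      rcases List.mem_append.mp hl with h | h
      · exact (hn1 l h a ha).trans subl
      · exact (hn2 l h a ha).trans subr
    · intro α
      simp only [MCForm.sem, sp1 α, sp2 α, dsem, List.mem_flatMap, List.mem_map]
      constructor
      · rintro ⟨⟨l1, hl1, h1⟩, ⟨l2, hl2, h2⟩⟩
        exact ⟨l1 ++ l2, ⟨l1, hl1, l2, hl2, rfl⟩, by
          intro a ha; rcases List.mem_append.mp ha with h | h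
          exacts [h1 a h, h2 a h]⟩
      · rintro ⟨l, ⟨l1, hl1, l2, hl2, rfl⟩, h⟩
        exact ⟨⟨l1, hl1, fun a ha => h a (List.mem_append.mpr (Or.inl ha))⟩,
          ⟨l2, hl2, fun a ha => h a (List.mem_append.mpr (Or.inr ha))⟩⟩
    · intro α
      have : ¬ (φ.and ψ).sem α ↔ ¬ φ.sem α ∨ ¬ ψ.sem α := by
        simp only [MCForm.sem]; exact not_and_or
      rw [this, sn1 α, sn2 α]
      simp [dsem, List.mem_append]
      constructor
      · rintro (⟨l, hl, h⟩ | ⟨l, hl, h⟩) <;> exact ⟨l, by tauto, h⟩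
      · rintro ⟨l, hl | hl, h⟩
        exacts [Or.inl ⟨l, hl, h⟩, Or.inr ⟨l, hl, h⟩]
  | or φ ψ ih1 ih2 =>
    obtain ⟨Lp1, Ln1, hp1, hn1, sp1, sn1⟩ := ih1
    obtain ⟨Lp2, Ln2, hp2, hn2, sp2, sn2⟩ := ih2
    have subl : φ.constants ⊆ (φ.or ψ).constants := Set.subset_union_left
    have subr : ψ.constants ⊆ (φ.or ψ).constants := Set.subset_union_right
    refine ⟨Lp1 ++ Lp2, Ln1.flatMap fun l1 => Ln2.map fun l2 => l1 ++ l2, ?_, ?_, ?_, ?_⟩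
    · intro l hl a ha
      rcases List.mem_append.mp hl with h | h
      · exact (hp1 l h a ha).trans subl
      · exact (hp2 l h a ha).trans subr
    · intro l hl a ha
      simp only [List.mem_flatMap, List.mem_map] at hl
      obtain ⟨l1, hl1, l2, hl2, rfl⟩ := hl
      rcases List.mem_append.mp ha with h | h
      · exact (hn1 l1 hl1 a h).trans subl
      · exact (hn2 l2 hl2 a h).trans subr
    · intro α
      simp only [MCForm.sem, sp1 α, sp2 α, dsem, List.mem_append]
      constructor
      · rintro (⟨l, hl, h⟩ | ⟨l, hl, h⟩) <;> exact ⟨l, by tauto, h⟩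
      · rintro ⟨l, hl | hl, h⟩
        exacts [Or.inl ⟨l, hl, h⟩, Or.inr ⟨l, hl, h⟩]
    · intro α
      have : ¬ (φ.or ψ).sem α ↔ ¬ φ.sem α ∧ ¬ ψ.sem α := by
        simp only [MCForm.sem]; exact not_or
      rw [this, sn1 α, sn2 α]
      simp only [dsem, List.mem_flatMap, List.mem_map]
      constructor
      · rintro ⟨⟨l1, hl1, h1⟩, ⟨l2, hl2, h2⟩⟩
        exact ⟨l1 ++ l2, ⟨l1, hl1, l2, hl2, rfl⟩, by
          intro a ha; rcases List.mem_append.mp ha with h | h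
          exacts [h1 a h, h2 a h]⟩
      · rintro ⟨l, ⟨l1, hl1, l2, hl2, rfl⟩, h⟩
        exact ⟨⟨l1, hl1, fun a ha => h a (List.mem_append.mpr (Or.inl ha))⟩,
          ⟨l2, hl2, fun a ha => h a (List.mem_append.mpr (Or.inr ha))⟩⟩
  | not φ ih =>
    obtain ⟨Lp, Ln, hp, hn, sp, sn⟩ := ih
    refine ⟨Ln, Lp, hn, hp, fun α => (sn α), fun α => ?_⟩
    have : ¬ (φ.not).sem α ↔ φ.sem α := by simp only [MCForm.sem]; exact not_not
    rw [this, sp α]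

end HistQE
namespace HistQE
variable {X Y : Type}

/-! ### Valuations extending by one variable -/

def ext (q : ℚ) (α : X → ℚ) : Option X → ℚ := fun o => o.elim q α

lemma sem_ext_indep {t : MCTerm (Option X)} (ht : t ≠ .var none) (q q' : ℚ) (α : X → ℚ) :
    t.sem (ext q α) = t.sem (ext q' α) := by
  cases t with
  | var o => cases o with
    | none => exact absurd rfl ht
    | some x => rfl
  | const c => rfl

def tdown : MCTerm (Option X) → MCTerm X
  | .var (some x) => .var x
  | .var none => .const 0
  | .const c => .const c

lemma tdown_sem {t : MCTerm (Option X)} (ht : t ≠ .var none) (q : ℚ) (α : X → ℚ) :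
    (tdown t).sem α = t.sem (ext q α) := by
  cases t with
  | var o => cases o with
    | none => exact absurd rfl ht
    | some x => rfl
  | const c => rfl

lemma tdown_constants {t : MCTerm (Option X)} (ht : t ≠ .var none) :
    (tdown t).constants = t.constants := by
  cases t with
  | var o => cases o with
    | none => exact absurd rfl ht
    | some x => rfl
  | const c => rfl

def adown (a : Atom (Option X)) : Atom X := ⟨a.r, tdown a.p, tdown a.q⟩

lemma adown_sem {a : Atom (Option X)} (h1 : a.p ≠ .var none) (h2 : a.q ≠ .var none)
    (q : ℚ) (α : X → ℚ) : (adown a).sem α ↔ a.sem (ext q α) := by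
  unfold Atom.sem adown
  rw [tdown_sem h1 q α, tdown_sem h2 q α]

lemma adown_constants {a : Atom (Option X)} (h1 : a.p ≠ .var none) (h2 : a.q ≠ .var none) :
    (adown a).constants = a.constants := by
  unfold Atom.constants adown
  rw [tdown_constants h1, tdown_constants h2]

/-! ### Substitution of a term for the extra variable -/

def tsub (t : MCTerm (Option X)) : MCTerm (Option X) → MCTerm (Option X)
  | .var none => t
  | .var (some x) => .var (some x)
  | .const c => .const c

lemma tsub_ne {t : MCTerm (Option X)} (ht : t ≠ .var none) (s : MCTerm (Option X)) :
    tsub t s ≠ .var none := by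
  cases s with
  | var o => cases o with
    | none => exact ht
    | some x => simp [tsub]
  | const c => simp [tsub]

lemma tsub_sem (t s : MCTerm (Option X)) (q : ℚ) (α : X → ℚ) :
    (tsub t s).sem (ext q α) = s.sem (ext (t.sem (ext q α)) α) := by
  cases s with
  | var o => cases o with
    | none => rfl
    | some x => rfl
  | const c => rfl

lemma tsub_constants (t s : MCTerm (Option X)) :
    (tsub t s).constants ⊆ t.constants ∪ s.constants := by
  cases s with
  | var o => cases o with
    | none => exact Set.subset_union_left
    | some x => simp [tsub, MCTerm.constants]
  | const c => simp [tsub]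

def asub (t : MCTerm (Option X)) (a : Atom (Option X)) : Atom (Option X) :=
  ⟨a.r, tsub t a.p, tsub t a.q⟩

lemma asub_sem (t : MCTerm (Option X)) (a : Atom (Option X)) (q : ℚ) (α : X → ℚ) :
    (asub t a).sem (ext q α) ↔ a.sem (ext (t.sem (ext q α)) α) := by
  unfold Atom.sem asub
  rw [tsub_sem t a.p q α, tsub_sem t a.q q α]

lemma asub_constants (t : MCTerm (Option X)) (a : Atom (Option X)) :
    (asub t a).constants ⊆ t.constants ∪ a.constants := by
  unfold Atom.constants asub
  refine Set.union_subset ((tsub_constants t a.p).trans ?_) ((tsub_constants t a.q).trans ?_)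
  · exact Set.union_subset_union_right _ Set.subset_union_left
  · exact Set.union_subset_union_right _ Set.subset_union_right

/-! ### One-variable bounds over ℚ -/

def lbd (q : ℚ) (p : ℚ × Bool) : Prop := if p.2 then p.1 < q else p.1 ≤ q
def ubd (q : ℚ) (p : ℚ × Bool) : Prop := if p.2 then q < p.1 else q ≤ p.1
def cmp2 (p r : ℚ × Bool) : Prop := if p.2 || r.2 then p.1 < r.1 else p.1 ≤ r.1

lemma list_max : ∀ (L : List (ℚ × Bool)), L ≠ [] →
    ∃ m ∈ L, ∀ p ∈ L, p.1 < m.1 ∨ (p.1 = m.1 ∧ (p.2 = true → m.2 = true)) := by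
  intro L
  induction L with
  | nil => simp
  | cons a L ih =>
    intro _
    rcases eq_or_ne L [] with rfl | hL
    · exact ⟨a, by simp, by simp⟩
    · obtain ⟨m, hm, hmax⟩ := ih hL
      rcases lt_trichotomy a.1 m.1 with h | h | h
      · refine ⟨m, List.mem_cons_of_mem _ hm, ?_⟩
        intro p hp
        rcases List.mem_cons.mp hp with rfl | hp
        · exact Or.inl h
        · exact hmax p hp
      · cases ha : a.2 with
        | true =>
          refine ⟨a, List.mem_cons_self, ?_⟩
          intro p hp
          rcases List.mem_cons.mp hp with rfl | hp
          · exact Or.inr ⟨rfl, fun _ => ha⟩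
          · rcases hmax p hp with h' | h'
            · exact Or.inl (h'.trans_eq h.symm)
            · exact Or.inr ⟨h'.1.trans h.symm, fun _ => ha⟩
        | false =>
          refine ⟨m, List.mem_cons_of_mem _ hm, ?_⟩
          intro p hp
          rcases List.mem_cons.mp hp with rfl | hp
          · exact Or.inr ⟨h, fun hc => absurd hc (by simp [ha])⟩
          · exact hmax p hp
      · refine ⟨a, List.mem_cons_self, ?_⟩
        intro p hp
        rcases List.mem_cons.mp hp with rfl | hp
        · exact Or.inr ⟨rfl, fun h => h⟩
        · rcases hmax p hp with h' | h'
          · exact Or.inl (h'.trans h)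
          · exact Or.inl (h'.1.trans_lt h)

lemma list_min : ∀ (U : List (ℚ × Bool)), U ≠ [] →
    ∃ m ∈ U, ∀ p ∈ U, m.1 < p.1 ∨ (m.1 = p.1 ∧ (p.2 = true → m.2 = true)) := by
  intro U hU
  obtain ⟨m, hm, hmax⟩ := list_max (U.map fun p => (-p.1, p.2)) (by simpa using hU)
  simp only [List.mem_map] at hm
  obtain ⟨m', hm', hmeq⟩ := hm
  refine ⟨m', hm', ?_⟩
  intro p hp
  have := hmax (-p.1, p.2) (List.mem_map.mpr ⟨p, hp, rfl⟩)
  rw [← hmeq] at this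
  rcases this with h | h
  · exact Or.inl (by dsimp at h; linarith)
  · refine Or.inr ⟨by dsimp at h; linarith [h.1], ?_⟩
    intro hp2
    have := h.2
    simp only at this
    rw [← hmeq] at *
    exact this hp2

lemma bounds (L U : List (ℚ × Bool)) :
    (∃ q : ℚ, (∀ p ∈ L, lbd q p) ∧ (∀ p ∈ U, ubd q p)) ↔
    (∀ p ∈ L, ∀ r ∈ U, cmp2 p r) := by
  constructor
  · rintro ⟨q, hL, hU⟩ ⟨a, b⟩ hp ⟨c, d⟩ hr
    have h1 := hL _ hp
    have h2 := hU _ hr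
    unfold lbd at h1
    unfold ubd at h2
    unfold cmp2
    cases b <;> cases d <;> simp only [Bool.or_self, Bool.or_true, Bool.true_or,
      if_true, if_false, Bool.or_false] at h1 h2 ⊢ <;> simp at h1 h2 ⊢ <;> linarith
  · intro h
    rcases eq_or_ne L [] with rfl | hL
    · rcases eq_or_ne U [] with rfl | hU
      · exact ⟨0, by simp, by simp⟩
      · obtain ⟨m, hm, hmin⟩ := list_min U hU
        refine ⟨m.1 - 1, by simp, ?_⟩
        intro r hr
        have hlt : m.1 - 1 < r.1 := by
          rcases hmin r hr with h' | h'
          · linarith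
          · linarith [h'.1]
        unfold ubd
        split_ifs
        · exact hlt
        · linarith
    · rcases eq_or_ne U [] with rfl | hU
      · obtain ⟨m, hm, hmax⟩ := list_max L hL
        refine ⟨m.1 + 1, ?_, by simp⟩
        intro p hp
        have hlt : p.1 < m.1 + 1 := by
          rcases hmax p hp with h' | h'
          · linarith
          · linarith [h'.1]
        unfold lbd
        split_ifs
        · exact hlt
        · linarith
      · obtain ⟨m, hm, hmax⟩ := list_max L hL
        obtain ⟨w, hw, hmin⟩ := list_min U hU
        have key : ∃ q : ℚ, (m.1 ≤ q) ∧ (m.2 = true → m.1 < q) ∧ (q ≤ w.1) ∧ (w.2 = true → q < w.1) := by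
          have hc := h m hm w hw
          unfold cmp2 at hc
          by_cases hb : m.2 = true ∨ w.2 = true
          · have hlt : m.1 < w.1 := by
              have : (m.2 || w.2) = true := by
                rcases hb with hb | hb <;> simp [hb]
              rwa [if_pos this] at hc
            exact ⟨(m.1 + w.1) / 2, by linarith, fun _ => by linarith, by linarith,
              fun _ => by linarith⟩
          · push_neg at hb
            have hm2 : m.2 = false := by simpa using hb.1
            have hw2 : w.2 = false := by simpa using hb.2
            have hle : m.1 ≤ w.1 := by
              rw [hm2, hw2] at hc
              simpa using hc
            exact ⟨m.1, le_refl _, fun hc' => absurd hc' (by simp [hm2]), hle,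
              fun hc' => absurd hc' (by simp [hw2])⟩
        obtain ⟨q, h1, h2, h3, h4⟩ := key
        refine ⟨q, ?_, ?_⟩
        · intro p hp
          unfold lbd
          rcases hmax p hp with h' | h'
          · split_ifs
            · linarith
            · linarith
          · obtain ⟨he, himp⟩ := h'
            split_ifs with hp2
            · exact he ▸ h2 (himp hp2)
            · exact he ▸ h1
        · intro r hr
          unfold ubd
          rcases hmin r hr with h' | h'
          · split_ifs
            · linarith
            · linarith
          · obtain ⟨he, himp⟩ := h'
            split_ifs with hr2
            · exact he ▸ h4 (himp hr2)
            · exact he ▸ h3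

end HistQE
namespace HistQE
variable {X : Type}

lemma asem_indep {a : Atom (Option X)} (h1 : a.p ≠ .var none) (h2 : a.q ≠ .var none)
    (q q' : ℚ) (α : X → ℚ) : a.sem (ext q α) ↔ a.sem (ext q' α) :=
  (adown_sem h1 h2 q α).symm.trans (adown_sem h1 h2 q' α)

lemma classify (C : Set ℚ) :
    ∀ l : List (Atom (Option X)), (∀ a ∈ l, Atom.constants a ⊆ C) →
    ((⟨.rlt, .var none, .var none⟩ : Atom (Option X)) ∈ l) ∨
    (∃ t : MCTerm (Option X), t ≠ .var none ∧
      ((⟨.req, .var none, t⟩ : Atom (Option X)) ∈ l ∨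
       (⟨.req, t, .var none⟩ : Atom (Option X)) ∈ l)) ∨
    (∃ (K : List (Atom (Option X))) (L U : List (MCTerm (Option X) × Bool)),
      (∀ a ∈ K, Atom.constants a ⊆ C ∧ a.p ≠ .var none ∧ a.q ≠ .var none) ∧
      (∀ p ∈ L, p.1 ≠ .var none ∧ MCTerm.constants p.1 ⊆ C) ∧
      (∀ p ∈ U, p.1 ≠ .var none ∧ MCTerm.constants p.1 ⊆ C) ∧
      (∀ (q : ℚ) (α : X → ℚ),
        (∀ a ∈ l, a.sem (ext q α)) ↔
        ((∀ a ∈ K, a.sem (ext q α)) ∧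
         (∀ p ∈ L, lbd q (p.1.sem (ext q α), p.2)) ∧
         (∀ p ∈ U, ubd q (p.1.sem (ext q α), p.2))))) := by
  intro l
  induction l with
  | nil =>
    intro _
    refine Or.inr (Or.inr ⟨[], [], [], by simp, by simp, by simp, ?_⟩)
    intro q α
    simp
  | cons a l ih =>
    intro hC
    have hCl : ∀ b ∈ l, Atom.constants b ⊆ C := fun b hb => hC b (List.mem_cons_of_mem _ hb)
    have hCa : Atom.constants a ⊆ C := hC a (List.mem_cons_self)
    rcases ih hCl with h | ⟨t, ht, hmem⟩ | ⟨K, L, U, hK, hL, hU, hsem⟩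
    · exact Or.inl (List.mem_cons_of_mem _ h)
    · exact Or.inr (Or.inl ⟨t, ht, hmem.imp (List.mem_cons_of_mem _) (List.mem_cons_of_mem _)⟩)
    obtain ⟨r, p, q0⟩ := a
    by_cases hp : p = MCTerm.var none <;> by_cases hq : q0 = MCTerm.var none
    · -- both sides are the variable
      subst hp; subst hq
      cases r with
      | rlt => exact Or.inl (List.mem_cons_self)
      | req =>
        refine Or.inr (Or.inr ⟨K, L, U, hK, hL, hU, ?_⟩)
        intro q α
        rw [List.forall_mem_cons, hsem q α]
        simp [Atom.sem, Rel3.sem, MCTerm.sem, ext]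
      | rle =>
        refine Or.inr (Or.inr ⟨K, L, U, hK, hL, hU, ?_⟩)
        intro q α
        rw [List.forall_mem_cons, hsem q α]
        simp [Atom.sem, Rel3.sem, MCTerm.sem, ext]
    · -- only the left side is the variable
      subst hp
      have hq0C : MCTerm.constants q0 ⊆ C := Set.subset_union_right.trans hCa
      cases r with
      | req => exact Or.inr (Or.inl ⟨q0, hq, Or.inl (List.mem_cons_self)⟩)
      | rle =>
        refine Or.inr (Or.inr ⟨K, L, (q0, false) :: U, hK, hL, ?_, ?_⟩)
        · intro pr hpr
          rcases List.mem_cons.mp hpr with rfl | hpr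
          · exact ⟨hq, hq0C⟩
          · exact hU pr hpr
        · intro q α
          rw [List.forall_mem_cons, hsem q α, List.forall_mem_cons]
          simp only [Atom.sem, Rel3.sem, MCTerm.sem, ext, ubd, Option.elim]
          tauto
      | rlt =>
        refine Or.inr (Or.inr ⟨K, L, (q0, true) :: U, hK, hL, ?_, ?_⟩)
        · intro pr hpr
          rcases List.mem_cons.mp hpr with rfl | hpr
          · exact ⟨hq, hq0C⟩
          · exact hU pr hpr
        · intro q α
          rw [List.forall_mem_cons, hsem q α, List.forall_mem_cons]
          simp only [Atom.sem, Rel3.sem, MCTerm.sem, ext, ubd, Option.elim]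
          tauto
    · -- only the right side is the variable
      subst hq
      have hpC : MCTerm.constants p ⊆ C := Set.subset_union_left.trans hCa
      cases r with
      | req => exact Or.inr (Or.inl ⟨p, hp, Or.inr (List.mem_cons_self)⟩)
      | rle =>
        refine Or.inr (Or.inr ⟨K, (p, false) :: L, U, hK, ?_, hU, ?_⟩)
        · intro pr hpr
          rcases List.mem_cons.mp hpr with rfl | hpr
          · exact ⟨hp, hpC⟩
          · exact hL pr hpr
        · intro q α
          rw [List.forall_mem_cons, hsem q α, List.forall_mem_cons]
          simp only [Atom.sem, Rel3.sem, MCTerm.sem, ext, lbd, Option.elim]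
          tauto
      | rlt =>
        refine Or.inr (Or.inr ⟨K, (p, true) :: L, U, hK, ?_, hU, ?_⟩)
        · intro pr hpr
          rcases List.mem_cons.mp hpr with rfl | hpr
          · exact ⟨hp, hpC⟩
          · exact hL pr hpr
        · intro q α
          rw [List.forall_mem_cons, hsem q α, List.forall_mem_cons]
          simp only [Atom.sem, Rel3.sem, MCTerm.sem, ext, lbd, Option.elim]
          tauto
    · -- the variable occurs on neither side
      refine Or.inr (Or.inr ⟨⟨r, p, q0⟩ :: K, L, U, ?_, hL, hU, ?_⟩)
      · intro b hb
        rcases List.mem_cons.mp hb with rfl | hb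
        · exact ⟨hCa, hp, hq⟩
        · exact hK b hb
      · intro q α
        rw [List.forall_mem_cons, hsem q α, List.forall_mem_cons]
        tauto

end HistQE
namespace HistQE
variable {X : Type}

lemma qe_conj (C : Set ℚ) (l : List (Atom (Option X))) (hC : ∀ a ∈ l, Atom.constants a ⊆ C) :
    ∃ φ : MCForm X, φ.constants ⊆ C ∧
      ∀ α : X → ℚ, (φ.sem α ↔ ∃ q : ℚ, ∀ a ∈ l, a.sem (ext q α)) := by
  rcases classify C l hC with h | ⟨t, ht, hmem⟩ | ⟨K, L, U, hK, hL, hU, hsem⟩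
  · -- an atom `x < x` occurs: the conjunct is unsatisfiable
    refine ⟨.fls, by simp [MCForm.constants], ?_⟩
    intro α
    simp only [MCForm.sem, false_iff, not_exists]
    intro q hq
    have := hq _ h
    simp [Atom.sem, Rel3.sem, MCTerm.sem, ext] at this
  · -- an equation `x = t` occurs: substitute t for x
    have htC : MCTerm.constants t ⊆ C := by
      rcases hmem with h | h
      · have := hC _ h
        exact (Set.subset_union_right).trans this
      · have := hC _ h
        exact (Set.subset_union_left).trans this
    refine ⟨conj (l.map fun a => (adown (asub t a)).toForm), ?_, ?_⟩
    · refine conj_constants _ ?_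
      intro ψ hψ
      simp only [List.mem_map] at hψ
      obtain ⟨a, ha, rfl⟩ := hψ
      rw [Atom.toForm_constants, adown_constants (tsub_ne ht _) (tsub_ne ht _)]
      exact (asub_constants t a).trans (Set.union_subset htC (hC a ha))
    · intro α
      have key : ∀ α' : X → ℚ, (conj (l.map fun a => (adown (asub t a)).toForm)).sem α' ↔
          ∀ a ∈ l, a.sem (ext (t.sem (ext 0 α')) α') := by
        intro α'
        rw [conj_sem]
        constructor
        · intro h a ha
          have := h _ (List.mem_map.mpr ⟨a, ha, rfl⟩)
          rw [Atom.toForm_sem, adown_sem (tsub_ne ht _) (tsub_ne ht _) 0 α'] at this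
          exact (asub_sem t a 0 α').mp this
        · intro h ψ hψ
          simp only [List.mem_map] at hψ
          obtain ⟨a, ha, rfl⟩ := hψ
          rw [Atom.toForm_sem, adown_sem (tsub_ne ht _) (tsub_ne ht _) 0 α']
          exact (asub_sem t a 0 α').mpr (h a ha)
      rw [key α]
      constructor
      · intro h
        exact ⟨t.sem (ext 0 α), h⟩
      · rintro ⟨q, hq⟩
        have hqt : q = t.sem (ext 0 α) := by
          rcases hmem with h | h
          · have := hq _ h
            simp only [Atom.sem, Rel3.sem, MCTerm.sem, ext, Option.elim] at this
            rw [this]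
            exact sem_ext_indep ht q 0 α
          · have := hq _ h
            simp only [Atom.sem, Rel3.sem, MCTerm.sem, ext, Option.elim] at this
            rw [← this]
            exact sem_ext_indep ht q 0 α
        rw [← hqt]
        exact hq
  · -- only inequalities involve x : Fourier–Motzkin style elimination
    refine ⟨.and (conj (K.map fun a => (adown a).toForm))
        (conj (L.flatMap fun pL => U.map fun pU =>
          (Atom.mk (if pL.2 || pU.2 then .rlt else .rle) (tdown pL.1) (tdown pU.1)).toForm)),
      ?_, ?_⟩
    · refine Set.union_subset (conj_constants _ ?_) (conj_constants _ ?_)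
      · intro ψ hψ
        simp only [List.mem_map] at hψ
        obtain ⟨a, ha, rfl⟩ := hψ
        rw [Atom.toForm_constants, adown_constants (hK a ha).2.1 (hK a ha).2.2]
        exact (hK a ha).1
      · intro ψ hψ
        simp only [List.mem_flatMap, List.mem_map] at hψ
        obtain ⟨pL, hpL, pU, hpU, rfl⟩ := hψ
        rw [Atom.toForm_constants]
        show MCTerm.constants (tdown pL.1) ∪ MCTerm.constants (tdown pU.1) ⊆ C
        rw [tdown_constants (hL pL hpL).1, tdown_constants (hU pU hpU).1]
        exact Set.union_subset (hL pL hpL).2 (hU pU hpU).2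
    · intro α
      -- rewrite LHS
      have lhs : (MCForm.and (conj (K.map fun a => (adown a).toForm))
          (conj (L.flatMap fun pL => U.map fun pU =>
            (Atom.mk (if pL.2 || pU.2 then .rlt else .rle) (tdown pL.1) (tdown pU.1)).toForm))).sem α ↔
          ((∀ a ∈ K, (adown a).sem α) ∧
           (∀ pL ∈ L, ∀ pU ∈ U, cmp2 ((tdown pL.1).sem α, pL.2) ((tdown pU.1).sem α, pU.2))) := by
        show (_ ∧ _) ↔ _
        rw [conj_sem, conj_sem]
        constructor
        · rintro ⟨h1, h2⟩
          refine ⟨?_, ?_⟩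
          · intro a ha
            have := h1 _ (List.mem_map.mpr ⟨a, ha, rfl⟩)
            rwa [Atom.toForm_sem] at this
          · intro pL hpL pU hpU
            have := h2 _ (by
              simp only [List.mem_flatMap, List.mem_map]
              exact ⟨pL, hpL, pU, hpU, rfl⟩)
            rw [Atom.toForm_sem] at this
            unfold cmp2
            cases hb : (pL.2 || pU.2) <;>
              simpa [Atom.sem, hb, Rel3.sem] using this
        · rintro ⟨h1, h2⟩
          refine ⟨?_, ?_⟩
          · intro ψ hψ
            simp only [List.mem_map] at hψ
            obtain ⟨a, ha, rfl⟩ := hψ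
            rw [Atom.toForm_sem]
            exact h1 a ha
          · intro ψ hψ
            simp only [List.mem_flatMap, List.mem_map] at hψ
            obtain ⟨pL, hpL, pU, hpU, rfl⟩ := hψ
            rw [Atom.toForm_sem]
            have := h2 pL hpL pU hpU
            unfold cmp2 at this
            cases hb : (pL.2 || pU.2) <;>
              simp [Atom.sem, hb, Rel3.sem] <;> simp [hb] at this <;> exact this
      rw [lhs]
      -- rewrite RHS using the classification and the bounds lemma
      have rhs : (∃ q : ℚ, ∀ a ∈ l, a.sem (ext q α)) ↔
          ((∀ a ∈ K, (adown a).sem α) ∧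
           ∃ q : ℚ, (∀ pL ∈ L, lbd q ((tdown pL.1).sem α, pL.2)) ∧
                    (∀ pU ∈ U, ubd q ((tdown pU.1).sem α, pU.2))) := by
        constructor
        · rintro ⟨q, hq⟩
          rw [hsem q α] at hq
          obtain ⟨h1, h2, h3⟩ := hq
          refine ⟨?_, q, ?_, ?_⟩
          · intro a ha
            rw [adown_sem (hK a ha).2.1 (hK a ha).2.2 q α]
            exact h1 a ha
          · intro pL hpL
            have := h2 pL hpL
            rwa [← tdown_sem (hL pL hpL).1 q α] at this
          · intro pU hpU
            have := h3 pU hpU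
            rwa [← tdown_sem (hU pU hpU).1 q α] at this
        · rintro ⟨h1, q, h2, h3⟩
          refine ⟨q, ?_⟩
          rw [hsem q α]
          refine ⟨?_, ?_, ?_⟩
          · intro a ha
            rw [← adown_sem (hK a ha).2.1 (hK a ha).2.2 q α]
            exact h1 a ha
          · intro pL hpL
            rw [← tdown_sem (hL pL hpL).1 q α]
            exact h2 pL hpL
          · intro pU hpU
            rw [← tdown_sem (hU pU hpU).1 q α]
            exact h3 pU hpU
      rw [rhs]
      have hb := bounds (L.map fun pL => ((tdown pL.1).sem α, pL.2))
        (U.map fun pU => ((tdown pU.1).sem α, pU.2))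
      simp only [List.forall_mem_map] at hb
      rw [hb]

end HistQE
namespace HistQE
variable {X : Type}

lemma qe_disj (C : Set ℚ) : ∀ (Lp : List (List (Atom (Option X)))),
    (∀ l ∈ Lp, ∀ a ∈ l, Atom.constants a ⊆ C) →
    ∃ ψ : MCForm X, ψ.constants ⊆ C ∧
      ∀ α : X → ℚ, (ψ.sem α ↔ ∃ l ∈ Lp, ∃ q : ℚ, ∀ a ∈ l, a.sem (ext q α)) := by
  intro Lp
  induction Lp with
  | nil => exact fun _ => ⟨.fls, by simp [MCForm.constants], by simp [MCForm.sem]⟩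
  | cons l Lp ih =>
    intro h
    obtain ⟨ψ, hψC, hψ⟩ := ih fun l' hl' => h l' (List.mem_cons_of_mem _ hl')
    obtain ⟨φ, hφC, hφ⟩ := qe_conj C l (h l (List.mem_cons_self))
    refine ⟨.or φ ψ, Set.union_subset hφC hψC, ?_⟩
    intro α
    show φ.sem α ∨ ψ.sem α ↔ _
    rw [hφ α, hψ α]
    constructor
    · rintro (⟨q, hq⟩ | ⟨l', hl', hq⟩)
      · exact ⟨l, List.mem_cons_self, q, hq⟩
      · exact ⟨l', List.mem_cons_of_mem _ hl', hq⟩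
    · rintro ⟨l', hl', hq⟩
      rcases List.mem_cons.mp hl' with rfl | hl'
      · exact Or.inl hq
      · exact Or.inr ⟨l', hl', hq⟩

lemma qe_one (C : Set ℚ) (φ : MCForm (Option X)) (hC : φ.constants ⊆ C) :
    ∃ ψ : MCForm X, ψ.constants ⊆ C ∧
      ∀ α : X → ℚ, (ψ.sem α ↔ ∃ q : ℚ, φ.sem (ext q α)) := by
  obtain ⟨Lp, Ln, hp, hn, sp, sn⟩ := toDNF φ
  obtain ⟨ψ, h1, h2⟩ := qe_disj C Lp fun l hl a ha => (hp l hl a ha).trans hC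
  refine ⟨ψ, h1, fun α => ?_⟩
  rw [h2 α]
  constructor
  · rintro ⟨l, hl, q, hq⟩
    exact ⟨q, (sp (ext q α)).mpr ⟨l, hl, hq⟩⟩
  · rintro ⟨q, hq⟩
    obtain ⟨l, hl, h⟩ := (sp (ext q α)).mp hq
    exact ⟨l, hl, q, h⟩

def gstep (k : ℕ) (Y : Type) : (Fin (k + 1) ⊕ Y) → Option (Fin k ⊕ Y) :=
  Sum.elim (fun i => Fin.cases none (fun j => some (Sum.inl j)) i) fun y => some (Sum.inr y)

lemma qe_fin : ∀ (k : ℕ) (Y : Type) (φ : MCForm (Fin k ⊕ Y)) (C : Set ℚ), φ.constants ⊆ C →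
    ∃ ψ : MCForm Y, ψ.constants ⊆ C ∧
      ∀ α : Y → ℚ, (ψ.sem α ↔ ∃ u : Fin k → ℚ, φ.sem (Sum.elim u α)) := by
  intro k
  induction k with
  | zero =>
    intro Y φ C hC
    refine ⟨MCForm.map (Sum.elim (fun i => i.elim0) id) φ,
      by rw [MCForm.map_constants]; exact hC, fun α => ?_⟩
    rw [MCForm.map_sem]
    have key : ∀ u : Fin 0 → ℚ,
        α ∘ Sum.elim (fun i : Fin 0 => i.elim0) id = Sum.elim u α := by
      intro u
      funext x
      cases x with
      | inl i => exact i.elim0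
      | inr y => rfl
    constructor
    · intro h
      refine ⟨fun i => i.elim0, ?_⟩
      rwa [key _] at h
    · rintro ⟨u, hu⟩
      rwa [key u]
  | succ k ih =>
    intro Y φ C hC
    obtain ⟨ψ', h1, h2⟩ := qe_one C (MCForm.map (gstep k Y) φ)
      (by rw [MCForm.map_constants]; exact hC)
    obtain ⟨ψ, h3, h4⟩ := ih Y ψ' C h1
    refine ⟨ψ, h3, fun α => ?_⟩
    rw [h4 α]
    have gext : ∀ (q : ℚ) (u : Fin k → ℚ),
        ext q (Sum.elim u α) ∘ gstep k Y = Sum.elim (Fin.cons q u) α := by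
      intro q u
      funext x
      cases x with
      | inl i =>
        refine Fin.cases ?_ ?_ i
        · simp [gstep, ext]
        · intro j
          simp [gstep, ext]
      | inr y => rfl
    constructor
    · rintro ⟨u, hu⟩
      rw [h2] at hu
      obtain ⟨q, hq⟩ := hu
      rw [MCForm.map_sem, gext q u] at hq
      exact ⟨Fin.cons q u, hq⟩
    · rintro ⟨u', hu⟩
      refine ⟨fun j => u' j.succ, ?_⟩
      rw [h2]
      refine ⟨u' 0, ?_⟩
      rw [MCForm.map_sem, gext (u' 0) fun j => u' j.succ]
      have : (Fin.cons (u' 0) fun j => u' j.succ) = u' := by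
        funext i
        refine Fin.cases ?_ ?_ i <;> simp
      rwa [this]

lemma qe_sum {V Y : Type} [Fintype V] (C : Set ℚ) (φ : MCForm (V ⊕ Y)) (hC : φ.constants ⊆ C) :
    ∃ ψ : MCForm Y, ψ.constants ⊆ C ∧
      ∀ α : Y → ℚ, (ψ.sem α ↔ ∃ u : V → ℚ, φ.sem (Sum.elim u α)) := by
  obtain ⟨e⟩ : Nonempty (V ≃ Fin (Fintype.card V)) := ⟨Fintype.equivFin V⟩
  obtain ⟨ψ, h1, h2⟩ := qe_fin (Fintype.card V) Y (MCForm.map (Sum.map (⇑e) id) φ)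
    C (by rw [MCForm.map_constants]; exact hC)
  refine ⟨ψ, h1, fun α => ?_⟩
  rw [h2 α]
  have key : ∀ u : Fin (Fintype.card V) → ℚ,
      Sum.elim u α ∘ Sum.map (⇑e) id = Sum.elim (u ∘ e) α := by
    intro u
    funext x
    cases x with
    | inl v => rfl
    | inr y => rfl
  constructor
  · rintro ⟨u, hu⟩
    rw [MCForm.map_sem, key u] at hu
    exact ⟨u ∘ e, hu⟩
  · rintro ⟨u, hu⟩
    refine ⟨u ∘ e.symm, ?_⟩
    rw [MCForm.map_sem, key _]
    have : (u ∘ ⇑e.symm) ∘ ⇑e = u := by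
      funext v
      simp
    rwa [this]

end HistQE
section
variable {V A : Type}

/-- Semantic history constraint for a DDSA whose guards are MC formulas over
read variables (`Sum.inl`) and write variables (`Sum.inr`).
Free variables of the history constraint are `V` (current values, `Sum.inl`)
and the copy `V₀` (initial values, `Sum.inr`).
`acts i` is the action of the `(i+1)`-st step, `θ i` the `i`-th verification
constraint (an MC formula over `V ∪ V₀`). -/
def histMC (write : A → Set V) (guard : A → MCForm (V ⊕ V))
    (acts : ℕ → A) (θ : ℕ → MCForm (V ⊕ V)) : ℕ → ((V ⊕ V) → ℚ) → Prop
  | 0, α => (∀ v, α (Sum.inl v) = α (Sum.inr v)) ∧ (θ 0).sem α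
  | n + 1, α =>
      (∃ u : V → ℚ,
        histMC write guard acts θ n (Sum.elim u fun v => α (Sum.inr v)) ∧
        (guard (acts n)).sem (Sum.elim u fun v => α (Sum.inl v)) ∧
        ∀ v ∉ write (acts n), α (Sum.inl v) = u v) ∧
      (θ (n + 1)).sem α

open HistQE

/-- **History constraints of MC systems are MC formulas.**
If all guards of the DDSA and all verification constraints are MC formulas
with constants in `C`, then each history constraint along any symbolic run is
logically equivalent to a quantifier-free MC formula over `V ∪ V₀` with
constants in `C`. -/
theorem histMC_equiv_MCForm [Fintype V]
    (C : Set ℚ) (write : A → Set V) (guard : A → MCForm (V ⊕ V))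
    (acts : ℕ → A) (θ : ℕ → MCForm (V ⊕ V))
    (hguard : ∀ a, (guard a).constants ⊆ C)
    (hθ : ∀ i, (θ i).constants ⊆ C) (n : ℕ) :
    ∃ φ : MCForm (V ⊕ V), φ.constants ⊆ C ∧
      ∀ α : (V ⊕ V) → ℚ, φ.sem α ↔ histMC write guard acts θ n α := by
  induction n with
  | zero =>
    refine ⟨.and (conj ((Finset.univ : Finset V).toList.map fun v =>
        MCForm.atom .eq (.var (Sum.inl v)) (.var (Sum.inr v)))) (θ 0), ?_, ?_⟩
    · refine Set.union_subset (conj_constants _ ?_) (hθ 0)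
      intro ψ hψ
      simp only [List.mem_map] at hψ
      obtain ⟨v, _, rfl⟩ := hψ
      simp [MCForm.constants, MCTerm.constants]
    · intro α
      show (_ ∧ _) ↔ _
      simp only [histMC]
      refine and_congr ?_ Iff.rfl
      rw [conj_sem]
      constructor
      · intro h v
        have := h _ (List.mem_map.mpr ⟨v, by simp, rfl⟩)
        simpa [MCForm.sem, MCRel.sem, MCTerm.sem] using this
      · intro h ψ hψ
        simp only [List.mem_map] at hψ
        obtain ⟨v, _, rfl⟩ := hψ
        simpa [MCForm.sem, MCRel.sem, MCTerm.sem] using h v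
  | succ n ih =>
    obtain ⟨φn, hφnC, hφn⟩ := ih
    classical
    set a := acts n with ha
    set f1 : (V ⊕ V) → (V ⊕ (V ⊕ V)) := Sum.elim Sum.inl fun v => Sum.inr (Sum.inr v) with hf1
    set f2 : (V ⊕ V) → (V ⊕ (V ⊕ V)) := Sum.elim Sum.inl fun v => Sum.inr (Sum.inl v) with hf2
    set frame : MCForm (V ⊕ (V ⊕ V)) :=
      conj (((Finset.univ : Finset V).filter fun v => v ∉ write a).toList.map
        fun v => MCForm.atom .eq (.var (Sum.inr (Sum.inl v))) (.var (Sum.inl v))) with hfr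
    have hΨC : (MCForm.and (MCForm.map f1 φn)
        (MCForm.and (MCForm.map f2 (guard a)) frame)).constants ⊆ C := by
      refine Set.union_subset ?_ (Set.union_subset ?_ ?_)
      · rw [MCForm.map_constants]; exact hφnC
      · rw [MCForm.map_constants]; exact hguard a
      · refine conj_constants _ ?_
        intro ψ hψ
        simp only [List.mem_map] at hψ
        obtain ⟨v, _, rfl⟩ := hψ
        simp [MCForm.constants, MCTerm.constants]
    obtain ⟨ψ, h1, h2⟩ := qe_sum C _ hΨC
    refine ⟨.and ψ (θ (n + 1)), Set.union_subset h1 (hθ (n + 1)), fun α => ?_⟩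
    show ψ.sem α ∧ _ ↔ _
    simp only [histMC]
    refine and_congr ?_ Iff.rfl
    rw [h2 α]
    have hframe : ∀ u : V → ℚ,
        (frame.sem (Sum.elim u α) ↔ ∀ v ∉ write a, α (Sum.inl v) = u v) := by
      intro u
      rw [hfr, conj_sem]
      constructor
      · intro h v hv
        have := h _ (List.mem_map.mpr ⟨v, by simp [hv], rfl⟩)
        simpa [MCForm.sem, MCRel.sem, MCTerm.sem] using this
      · intro h ψ' hψ'
        simp only [List.mem_map, Finset.mem_toList, Finset.mem_filter] at hψ'
        obtain ⟨v, ⟨_, hv⟩, rfl⟩ := hψ'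
        simpa [MCForm.sem, MCRel.sem, MCTerm.sem] using h v hv
    have hcomp1 : ∀ u : V → ℚ,
        Sum.elim u α ∘ f1 = Sum.elim u fun v => α (Sum.inr v) := by
      intro u; funext x; cases x <;> rfl
    have hcomp2 : ∀ u : V → ℚ,
        Sum.elim u α ∘ f2 = Sum.elim u fun v => α (Sum.inl v) := by
      intro u; funext x; cases x <;> rfl
    constructor
    · rintro ⟨u, hA, hB, hFr⟩
      refine ⟨u, ?_, ?_, ?_⟩
      · rw [MCForm.map_sem, hcomp1 u] at hA
        exact (hφn _).mp hA
      · rwa [MCForm.map_sem, hcomp2 u] at hB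
      · exact (hframe u).mp hFr
    · rintro ⟨u, hA, hB, hFr⟩
      refine ⟨u, ?_, ?_, ?_⟩
      · rw [MCForm.map_sem, hcomp1 u]
        exact (hφn _).mpr hA
      · rwa [MCForm.map_sem, hcomp2 u]
      · exact (hframe u).mpr hFr

end
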